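/- arXiv:math/0108192 — 6 statements merged into one kernel-verified Lean document; each statement's English description precedes it below -/
import Mathlib

section
/- Let Λ = ⊕_{g∈G} Λ_g be a ring strongly graded by a group G (i.e. Λ_g Λ_h = Λ_{gh} for all g,h), with identity component Δ = Λ_1. Then for every g, h ∈ G, if Λ_h ≅ Λ_1 as Δ-bimodules, then Λ_{g⁻¹hg} ≅ Λ_1 as Δ-bimodules. -/
open Pointwise
/-- A strong grading of the ring `Λ` by the group `G`: `Λ` is the internal direct
sum of the additive subgroups `A g`, and `A g * A h = A (g * h)` for all `g, h`. -/
structure IsStrongGrading {G Λ : Type*} [Group G] [Ring Λ] [DecidableEq G]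
    (A : G → AddSubgroup Λ) : Prop where
  internal : DirectSum.IsInternal A
  one_mem : (1 : Λ) ∈ A 1
  mul_mem : ∀ (g h : G), ∀ a ∈ A g, ∀ b ∈ A h, a * b ∈ A (g * h)
  strong : ∀ g h : G, A (g * h) ≤ AddSubgroup.closure ((A g : Set Λ) * (A h : Set Λ))

/-- `Λ_g ≅ Λ_h` as `Δ`-bimodules (`Δ = Λ_1`): an additive equivalence compatible
with left and right multiplication by elements of the identity component. -/
def ComponentBimodIso {G Λ : Type*} [Group G] [Ring Λ]
    (A : G → AddSubgroup Λ) (g h : G) : Prop :=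
  ∃ f : A g ≃+ A h,
    (∀ d ∈ A (1 : G), ∀ x y : A g, (y : Λ) = d * (x : Λ) → ((f y : Λ) = d * (f x : Λ))) ∧
    (∀ d ∈ A (1 : G), ∀ x y : A g, (y : Λ) = (x : Λ) * d → ((f y : Λ) = (f x : Λ) * d))

/-! Strongness gives `a k ∈ Λ_{g⁻¹}` and `b k ∈ Λ_g` with `∑ k, a k * b k = 1`. Conjugating by
this dual basis, `φ ↦ (x ↦ ∑ k, ∑ i, a k * φ (b k * x * a i) * b i)`, sends `Δ`-bimodule maps
`Λ_p → Λ_q` to `Δ`-bimodule maps `Λ_{g⁻¹pg} → Λ_{g⁻¹qg}`, and it is functorial because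
`b k * (conj φ x) * a i = φ (b k * x * a i)`. It therefore carries `Λ_h ≅ Λ_1` to
`Λ_{g⁻¹hg} ≅ Λ_{g⁻¹g} = Λ_1`. -/

section DualBasis

variable {Λ ι : Type*} [Ring Λ] [Fintype ι]

def IsBimodHom (D : AddSubgroup Λ) {M N : AddSubgroup Λ} (φ : M → N) : Prop :=
  ∀ d ∈ D, ∀ e ∈ D, ∀ x y : M, (y : Λ) = d * x * e → (φ y : Λ) = d * φ x * e

def IsBimod (D M : AddSubgroup Λ) : Prop :=
  ∀ d ∈ D, ∀ e ∈ D, ∀ x ∈ M, d * x * e ∈ M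

structure IsDualBasis (D : AddSubgroup Λ) (a b : ι → Λ) : Prop where
  sum_mul_eq_one : ∑ k, a k * b k = 1
  mul_mem : ∀ k j, b k * a j ∈ D
  mul_mul_mem : ∀ k j, ∀ d ∈ D, b k * d * a j ∈ D

theorem sum_sum_mul_mul_mul {a b : ι → Λ} (hab : ∑ k, a k * b k = 1) (x : Λ) :
    ∑ k, ∑ i, a k * (b k * x * a i) * b i = x :=
  calc ∑ k, ∑ i, a k * (b k * x * a i) * b i = (∑ k, a k * b k) * x * ∑ i, a i * b i := by
        simp only [Finset.sum_mul, Finset.mul_sum, mul_assoc]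
        exact Finset.sum_comm
    _ = x := by rw [hab, one_mul, mul_one]

def sandwichHom {M N : AddSubgroup Λ} (u v : Λ) (h : ∀ x ∈ M, u * x * v ∈ N) : M →+ N :=
  (((AddMonoidHom.mulRight v).comp (AddMonoidHom.mulLeft u)).comp M.subtype).codRestrict N
    fun x => h x x.2

@[simp]
theorem coe_sandwichHom_apply {M N : AddSubgroup Λ} (u v : Λ) (h : ∀ x ∈ M, u * x * v ∈ N)
    (x : M) : (sandwichHom u v h x : Λ) = u * x * v :=
  rfl

variable {M N P M' N' P' : AddSubgroup Λ} {a b : ι → Λ}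

def conjHom (a b : ι → Λ) (hM : ∀ k i, ∀ x ∈ M', b k * x * a i ∈ M)
    (hN : ∀ k i, ∀ y ∈ N, a k * y * b i ∈ N') (φ : M →+ N) : M' →+ N' :=
  ∑ k, ∑ i, (sandwichHom (a k) (b i) (hN k i)).comp (φ.comp (sandwichHom (b k) (a i) (hM k i)))

theorem coe_conjHom_apply (hM : ∀ k i, ∀ x ∈ M', b k * x * a i ∈ M)
    (hN : ∀ k i, ∀ y ∈ N, a k * y * b i ∈ N') (φ : M →+ N) (x : M') :
    (conjHom a b hM hN φ x : Λ) =
      ∑ k, ∑ i, a k * φ (sandwichHom (b k) (a i) (hM k i) x) * b i := by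
  simp [conjHom]

variable {D : AddSubgroup Λ} (hM : ∀ k i, ∀ x ∈ M', b k * x * a i ∈ M)
  (hN : ∀ k i, ∀ y ∈ N, a k * y * b i ∈ N')

theorem IsBimodHom.coe_apply_eq_mul_conjHom_mul {φ : M →+ N} (hφ : IsBimodHom D φ)
    (hDM : IsBimod D M) (hab : ∑ k, a k * b k = 1) {u v : Λ} (hu : ∀ j, u * a j ∈ D)
    (hv : ∀ l, b l * v ∈ D) {x : M'} {y : M} (hy : (y : Λ) = u * x * v) :
    (φ y : Λ) = u * conjHom a b hM hN φ x * v := by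
  let z : ι → ι → M := fun j l =>
    ⟨u * a j * (b j * x * a l) * (b l * v), hDM _ (hu j) _ (hv l) _ (hM j l x x.2)⟩
  have hyz : y = ∑ j, ∑ l, z j l := by
    apply Subtype.ext
    calc (y : Λ) = u * (∑ j, ∑ l, a j * (b j * x * a l) * b l) * v := by
          rw [sum_sum_mul_mul_mul hab, hy]
      _ = _ := by
          simp only [AddSubgroup.val_finsetSum, z, Finset.mul_sum, Finset.sum_mul, mul_assoc]
  calc (φ y : Λ) = ∑ j, ∑ l, (φ (z j l) : Λ) := by
        simp only [hyz, map_sum, AddSubgroup.val_finsetSum]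
    _ = ∑ j, ∑ l, u * a j * φ (sandwichHom (b j) (a l) (hM j l) x) * (b l * v) :=
        Finset.sum_congr rfl fun j _ => Finset.sum_congr rfl fun l _ =>
          hφ _ (hu j) _ (hv l) _ _ rfl
    _ = u * conjHom a b hM hN φ x * v := by
        simp only [coe_conjHom_apply, Finset.mul_sum, Finset.sum_mul, mul_assoc]

theorem IsDualBasis.sandwichHom_conjHom {φ : M →+ N} (hab : IsDualBasis D a b)
    (hφ : IsBimodHom D φ) (hDM : IsBimod D M) (hN' : ∀ k i, ∀ y ∈ N', b k * y * a i ∈ N)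
    (k i : ι) (x : M') :
    sandwichHom (b k) (a i) (hN' k i) (conjHom a b hM hN φ x) =
      φ (sandwichHom (b k) (a i) (hM k i) x) :=
  Subtype.ext (hφ.coe_apply_eq_mul_conjHom_mul hM hN hDM hab.sum_mul_eq_one
    (hab.mul_mem k) (fun l => hab.mul_mem l i) rfl).symm

theorem IsDualBasis.conjHom_comp {φ : M →+ N} (hab : IsDualBasis D a b)
    (hφ : IsBimodHom D φ) (hDM : IsBimod D M) (hN' : ∀ k i, ∀ y ∈ N', b k * y * a i ∈ N)
    (hP : ∀ k i, ∀ z ∈ P, a k * z * b i ∈ P') (ψ : N →+ P) :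
    conjHom a b hM hP (ψ.comp φ) = (conjHom a b hN' hP ψ).comp (conjHom a b hM hN φ) := by
  ext x
  simp only [coe_conjHom_apply, AddMonoidHom.comp_apply, hab.sandwichHom_conjHom hM hN hφ hDM]

theorem conjHom_id (hab : ∑ k, a k * b k = 1) (hM' : ∀ k i, ∀ x ∈ M, a k * x * b i ∈ M') :
    conjHom a b hM hM' (AddMonoidHom.id M) = AddMonoidHom.id M' := by
  ext x
  simp [coe_conjHom_apply, sum_sum_mul_mul_mul hab]

theorem IsDualBasis.isBimodHom_conjHom {φ : M →+ N} (hab : IsDualBasis D a b)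
    (hφ : IsBimodHom D φ) (hDM : IsBimod D M) : IsBimodHom D (conjHom a b hM hN φ) := by
  intro d hd e he x y hxy
  calc (conjHom a b hM hN φ y : Λ)
      = ∑ k, ∑ i, a k * φ (sandwichHom (b k) (a i) (hM k i) y) * b i := coe_conjHom_apply ..
    _ = ∑ k, ∑ i, a k * (b k * (d * conjHom a b hM hN φ x * e) * a i) * b i := by
        refine Finset.sum_congr rfl fun k _ => Finset.sum_congr rfl fun i _ => ?_
        have hv : ∀ l, b l * (e * a i) ∈ D := fun l => by
          rw [← mul_assoc]
          exact hab.mul_mul_mem l i e he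
        rw [hφ.coe_apply_eq_mul_conjHom_mul hM hN hDM hab.sum_mul_eq_one
          (fun j => hab.mul_mul_mem k j d hd) hv (x := x) (by simp [hxy, mul_assoc])]
        simp only [mul_assoc]
    _ = d * conjHom a b hM hN φ x * e := sum_sum_mul_mul_mul hab.sum_mul_eq_one _

theorem IsBimodHom.symm {f : M ≃+ N} (hf : IsBimodHom D f) (hDM : IsBimod D M) :
    IsBimodHom D f.symm := by
  intro d hd e he x y hxy
  let z : M := ⟨d * f.symm x * e, hDM d hd e he _ (f.symm x).2⟩
  have hfz : f z = y := Subtype.ext <| by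
    rw [hf d hd e he _ z rfl, f.apply_symm_apply, hxy]
  rw [← hfz, f.symm_apply_apply]

theorem IsDualBasis.exists_conj_addEquiv {f : M ≃+ N} (hab : IsDualBasis D a b)
    (hf : IsBimodHom D f) (hDM : IsBimod D M) (hDN : IsBimod D N)
    (hM : ∀ k i, ∀ x ∈ M', b k * x * a i ∈ M) (hM' : ∀ k i, ∀ x ∈ M, a k * x * b i ∈ M')
    (hN : ∀ k i, ∀ y ∈ N, a k * y * b i ∈ N') (hN' : ∀ k i, ∀ y ∈ N', b k * y * a i ∈ N) :
    ∃ F : M' ≃+ N', IsBimodHom D F := by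
  have hf' : IsBimodHom D f.symm := hf.symm hDM
  refine ⟨(conjHom a b hM hN f.toAddMonoidHom).toAddEquiv
    (conjHom a b hN' hM' f.symm.toAddMonoidHom) ?_ ?_, hab.isBimodHom_conjHom hM hN hf hDM⟩
  · rw [← hab.conjHom_comp hM hN hf hDM hN' hM', ← conjHom_id hM hab.sum_mul_eq_one hM']
    exact congrArg _ (AddMonoidHom.ext f.symm_apply_apply)
  · rw [← hab.conjHom_comp hN' hM' hf' hDN hM hN, ← conjHom_id hN' hab.sum_mul_eq_one hN]
    exact congrArg _ (AddMonoidHom.ext f.apply_symm_apply)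

end DualBasis

theorem AddSubgroup.exists_sum_mul_of_mem_closure_mul {Λ : Type*} [Ring Λ] {S T : AddSubgroup Λ}
    {x : Λ} (hx : x ∈ AddSubgroup.closure ((S : Set Λ) * (T : Set Λ))) :
    ∃ (n : ℕ) (a b : Fin n → Λ), (∀ k, a k ∈ S) ∧ (∀ k, b k ∈ T) ∧ ∑ k, a k * b k = x := by
  rw [← Submodule.span_int_eq_addSubgroupClosure, Submodule.mem_toAddSubgroup,
    Submodule.mem_span_set'] at hx
  obtain ⟨n, c, w, hcw⟩ := hx
  choose s hs t ht hst using fun k => Set.mem_mul.1 (w k).2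
  refine ⟨n, fun k => c k • s k, t, fun k => zsmul_mem (hs k) _, ht, ?_⟩
  simpa only [smul_mul_assoc, hst] using hcw

namespace IsStrongGrading

variable {G Λ : Type*} [Group G] [Ring Λ] [DecidableEq G] {A : G → AddSubgroup Λ}

theorem mul_mul_mem (hA : IsStrongGrading A) {p q r s : G} (hs : p * q * r = s) {x y z : Λ}
    (hx : x ∈ A p) (hy : y ∈ A q) (hz : z ∈ A r) : x * y * z ∈ A s :=
  hs ▸ hA.mul_mem _ _ _ (hA.mul_mem _ _ _ hx _ hy) _ hz

theorem isBimod (hA : IsStrongGrading A) (p : G) : IsBimod (A 1) (A p) :=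
  fun _ hd _ he _ hx => hA.mul_mul_mem (by simp) hd hx he

theorem exists_sum_mul_eq_one (hA : IsStrongGrading A) (g : G) :
    ∃ (n : ℕ) (a b : Fin n → Λ), (∀ k, a k ∈ A g⁻¹) ∧ (∀ k, b k ∈ A g) ∧ ∑ k, a k * b k = 1 :=
  AddSubgroup.exists_sum_mul_of_mem_closure_mul <|
    hA.strong g⁻¹ g <| by simpa only [inv_mul_cancel] using hA.one_mem

theorem isDualBasis {ι : Type*} [Fintype ι] (hA : IsStrongGrading A) {g : G} {a b : ι → Λ}
    (ha : ∀ k, a k ∈ A g⁻¹) (hb : ∀ k, b k ∈ A g) (hab : ∑ k, a k * b k = 1) :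
    IsDualBasis (A 1) a b where
  sum_mul_eq_one := hab
  mul_mem k j := by simpa only [mul_inv_cancel] using hA.mul_mem _ _ _ (hb k) _ (ha j)
  mul_mul_mem k j _ hd := hA.mul_mul_mem (by group) (hb k) hd (ha j)

theorem componentBimodIso_iff (hA : IsStrongGrading A) {p q : G} :
    ComponentBimodIso A p q ↔ ∃ f : A p ≃+ A q, IsBimodHom (A 1) f := by
  constructor
  · rintro ⟨f, hl, hr⟩
    refine ⟨f, fun d hd e he x y hxy => ?_⟩
    let z : A p := ⟨x * e, by simpa only [mul_one] using hA.mul_mem _ _ _ x.2 _ he⟩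
    rw [hl d hd z y (by rw [hxy, mul_assoc]), hr e he x z rfl, mul_assoc]
  · rintro ⟨f, hf⟩
    refine ⟨f, fun d hd x y hxy => ?_, fun e he x y hxy => ?_⟩
    · simpa only [mul_one] using hf d hd 1 hA.one_mem x y (by rw [hxy, mul_one])
    · simpa only [one_mul] using hf 1 hA.one_mem e he x y (by rw [hxy, one_mul])

end IsStrongGrading

/-- In a strongly `G`-graded ring, if `Λ_h ≅ Λ_1` as
`Δ`-bimodules then `Λ_{g⁻¹hg} ≅ Λ_1` as `Δ`-bimodules. -/
theorem conj_of_bimodIso {G Λ : Type*} [Group G] [Ring Λ] [DecidableEq G]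
    (A : G → AddSubgroup Λ) (hA : IsStrongGrading A) (g h : G)
    (hh : ComponentBimodIso A h 1) :
    ComponentBimodIso A (g⁻¹ * h * g) 1 := by
  obtain ⟨f, hf⟩ := hA.componentBimodIso_iff.1 hh
  obtain ⟨n, a, b, ha, hb, hab⟩ := hA.exists_sum_mul_eq_one g
  refine hA.componentBimodIso_iff.2 <|
    (hA.isDualBasis ha hb hab).exists_conj_addEquiv hf (hA.isBimod h) (hA.isBimod 1) ?_ ?_ ?_ ?_
  · exact fun k i x hx => hA.mul_mul_mem (by group) (hb k) hx (ha i)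
  · exact fun k i x hx => hA.mul_mul_mem rfl (ha k) hx (hb i)
  · exact fun k i y hy => hA.mul_mul_mem (by group) (ha k) hy (hb i)
  · exact fun k i y hy => hA.mul_mul_mem (by group) (hb k) hy (ha i)
end

section
/- Let Λ = ⊕_{g∈G} Λ_g be a strongly G-graded ring with identity component Δ. Define Inn_Δ(H) = {h ∈ H : Λ_h ≅ Δ as Δ-bimodules} for a subgroup H ≤ G. Then for any g ∈ G and any subgroup H ≤ G, Inn_Δ(g⁻¹Hg) = g⁻¹ Inn_Δ(H) g. -/
open Pointwise
/-!
Strong grading gives `1 = ∑ sᵢ tᵢ` with `sᵢ ∈ Λ_{c⁻¹}` and `tᵢ ∈ Λ_c`. Through this "dual basis",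
a `Δ`-bimodule map `f : Λ_a → Λ_b` induces `y ↦ ∑ sᵢ f(tᵢ y sⱼ) tⱼ : Λ_{c⁻¹ac} → Λ_{c⁻¹bc}`,
which is `Λ_{c⁻¹} ⊗_Δ f ⊗_Δ Λ_c` in disguise. The construction respects composition and
identities, so it carries isomorphisms to isomorphisms: `Λ_a ≅ Λ_b` implies
`Λ_{c⁻¹ac} ≅ Λ_{c⁻¹bc}`. Taking `b = 1` and conjugating by `g` and by `g⁻¹` gives both inclusions.
-/

section

variable {G Λ : Type*} [Group G] [Ring Λ] {A : G → AddSubgroup Λ}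

structure IsDualBasis_s1 (A : G → AddSubgroup Λ) (c : G) {ι : Type*} [Fintype ι]
    (s t : ι → Λ) : Prop where
  left_mem : ∀ i, s i ∈ A c⁻¹
  right_mem : ∀ i, t i ∈ A c
  sum_mul_eq_one : ∑ i, s i * t i = 1

/-- A `Δ`-bimodule map `Λ_a → Λ_b`, encoded as an additive endomorphism of `Λ` whose values
off `Λ_a` are irrelevant. -/
structure IsBimodMap (A : G → AddSubgroup Λ) (a b : G) (f : Λ →+ Λ) : Prop where
  mapsTo : ∀ x ∈ A a, f x ∈ A b
  map_mul_left : ∀ d ∈ A 1, ∀ x ∈ A a, f (d * x) = d * f x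
  map_mul_right : ∀ d ∈ A 1, ∀ x ∈ A a, f (x * d) = f x * d

namespace IsStrongGrading

variable [DecidableEq G]

theorem mul_mem_of_eq (hA : IsStrongGrading A) {a b c : G} (h : a * b = c) {x y : Λ}
    (hx : x ∈ A a) (hy : y ∈ A b) : x * y ∈ A c :=
  h ▸ hA.mul_mem a b x hx y hy

theorem mul_mul_mem_of_eq (hA : IsStrongGrading A) {a b c e : G} (h : a * b * c = e)
    {x y z : Λ} (hx : x ∈ A a) (hy : y ∈ A b) (hz : z ∈ A c) : x * y * z ∈ A e :=
  hA.mul_mem_of_eq h (hA.mul_mem a b x hx y hy) hz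

theorem exists_isDualBasis (hA : IsStrongGrading A) (c : G) :
    ∃ (n : ℕ) (s t : Fin n → Λ), IsDualBasis_s1 A c s t := by
  have hone : (1 : Λ) ∈ Submodule.span ℤ ((A c⁻¹ : Set Λ) * (A c : Set Λ)) := by
    rw [← AddSubgroup.toIntSubmodule_closure]
    exact hA.strong _ _ (by rw [inv_mul_cancel]; exact hA.one_mem)
  obtain ⟨n, k, p, hp⟩ := Submodule.mem_span_set'.1 hone
  choose s hs t ht hst using fun i => Set.mem_mul.1 (p i).2
  refine ⟨n, fun i => k i • s i, t, fun i => zsmul_mem (hs i) _, ht, ?_⟩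
  simp_rw [smul_mul_assoc, hst, hp]

theorem exists_extend (hA : IsStrongGrading A) {a b : G} (φ : A a →+ A b) :
    ∃ F : Λ →+ Λ, ∀ x (hx : x ∈ A a), F x = φ ⟨x, hx⟩ := by
  let := hA.internal.chooseDecomposition
  refine ⟨(A b).subtype.comp (φ.comp
    ((DFinsupp.evalAddMonoidHom a).comp (DirectSum.decomposeAddEquiv A).toAddMonoidHom)),
    fun x hx => ?_⟩
  have : DirectSum.decompose A x a = ⟨x, hx⟩ :=
    Subtype.ext (DirectSum.decompose_of_mem_same A hx)
  exact congrArg (fun z => (φ z : Λ)) this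

end IsStrongGrading

theorem IsBimodMap.symm [DecidableEq G] (hA : IsStrongGrading A) {f f' : Λ →+ Λ} {a b : G}
    (hf : IsBimodMap A a b f) (hf' : ∀ y ∈ A b, f' y ∈ A a) (hff' : ∀ x ∈ A a, f' (f x) = x)
    (hf'f : ∀ y ∈ A b, f (f' y) = y) : IsBimodMap A b a f' := by
  refine ⟨hf', fun d hd y hy => ?_, fun d hd y hy => ?_⟩
  · calc f' (d * y) = f' (f (d * f' y)) := by rw [hf.map_mul_left d hd _ (hf' y hy), hf'f y hy]
      _ = d * f' y := hff' _ (hA.mul_mem_of_eq (one_mul a) hd (hf' y hy))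
  · calc f' (y * d) = f' (f (f' y * d)) := by rw [hf.map_mul_right d hd _ (hf' y hy), hf'f y hy]
      _ = f' y * d := hff' _ (hA.mul_mem_of_eq (mul_one a) (hf' y hy) hd)

theorem componentBimodIso_iff [DecidableEq G] (hA : IsStrongGrading A) {a b : G} :
    ComponentBimodIso A a b ↔ ∃ f f' : Λ →+ Λ, IsBimodMap A a b f ∧ (∀ y ∈ A b, f' y ∈ A a) ∧
      (∀ x ∈ A a, f' (f x) = x) ∧ (∀ y ∈ A b, f (f' y) = y) := by
  constructor
  · rintro ⟨e, hl, hr⟩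
    obtain ⟨F, hF⟩ := hA.exists_extend e.toAddMonoidHom
    obtain ⟨F', hF'⟩ := hA.exists_extend e.symm.toAddMonoidHom
    simp only [AddEquiv.coe_toAddMonoidHom] at hF hF'
    refine ⟨F, F', ⟨fun x hx => ?_, fun d hd x hx => ?_, fun d hd x hx => ?_⟩,
      fun y hy => ?_, fun x hx => ?_, fun y hy => ?_⟩
    · rw [hF x hx]; exact (e _).2
    · rw [hF _ (hA.mul_mem_of_eq (one_mul a) hd hx), hF x hx]; exact hl d hd _ _ rfl
    · rw [hF _ (hA.mul_mem_of_eq (mul_one a) hx hd), hF x hx]; exact hr d hd _ _ rfl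
    · rw [hF' y hy]; exact (e.symm _).2
    · rw [hF x hx, hF' _ (e _).2]; simp
    · rw [hF' y hy, hF _ (e.symm _).2]; simp
  · rintro ⟨f, f', hf, hf'_mem, hff', hf'f⟩
    refine ⟨{ toFun := fun x => ⟨f x, hf.mapsTo _ x.2⟩
              invFun := fun y => ⟨f' y, hf'_mem _ y.2⟩
              left_inv := fun x => Subtype.ext (hff' _ x.2)
              right_inv := fun y => Subtype.ext (hf'f _ y.2)
              map_add' := fun x y => Subtype.ext (map_add f (x : Λ) y) }, ?_, ?_⟩
    · intro d hd x y hxy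
      show f y = d * f x
      rw [hxy, hf.map_mul_left d hd x x.2]
    · intro d hd x y hxy
      show f y = f x * d
      rw [hxy, hf.map_mul_right d hd x x.2]

section conjMap

variable {ι : Type*} [Fintype ι] {c : G} {s t : ι → Λ}

def conjMap (s t : ι → Λ) (f : Λ →+ Λ) : Λ →+ Λ :=
  AddMonoidHom.mk' (fun y => ∑ i, ∑ j, s i * f (t i * y * s j) * t j) fun y z => by
    simp only [mul_add, add_mul, map_add, Finset.sum_add_distrib]

theorem conjMap_apply (f : Λ →+ Λ) (y : Λ) :
    conjMap s t f y = ∑ i, ∑ j, s i * f (t i * y * s j) * t j := rfl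

namespace IsDualBasis_s1

theorem sum_mul_mul (h : IsDualBasis_s1 A c s t) (x : Λ) : ∑ i, s i * (t i * x) = x := by
  simp only [← mul_assoc, ← Finset.sum_mul, h.sum_mul_eq_one, one_mul]

theorem sum_mul_mul_right (h : IsDualBasis_s1 A c s t) (x : Λ) : ∑ i, x * s i * t i = x := by
  simp only [mul_assoc, ← Finset.mul_sum, h.sum_mul_eq_one, mul_one]

theorem sum_sum_mul_mul (h : IsDualBasis_s1 A c s t) (x : Λ) :
    ∑ i, ∑ j, s i * (t i * x * s j) * t j = x :=
  calc ∑ i, ∑ j, s i * (t i * x * s j) * t j = ∑ i, ∑ j, s i * (t i * x) * s j * t j := by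
        simp only [mul_assoc]
    _ = x := by simp only [h.sum_mul_mul_right, h.sum_mul_mul]

variable [DecidableEq G]

theorem mul_mul_mem (hA : IsStrongGrading A) (h : IsDualBasis_s1 A c s t) {w x : G}
    (hwx : c * w * c⁻¹ = x) {z : Λ} (hz : z ∈ A w) (i j : ι) : t i * z * s j ∈ A x :=
  hA.mul_mul_mem_of_eq hwx (h.right_mem i) hz (h.left_mem j)

theorem conjMap_eq_self (hA : IsStrongGrading A) (h : IsDualBasis_s1 A c s t) {f : Λ →+ Λ} {a : G}
    (hf : ∀ x ∈ A a, f x = x) : ∀ y ∈ A (c⁻¹ * a * c), conjMap s t f y = y := by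
  intro y hy
  simp only [conjMap_apply, hf _ (h.mul_mul_mem hA (by group) hy _ _), h.sum_sum_mul_mul]

variable {f : Λ →+ Λ} {a b : G}

theorem conjMap_mem (hA : IsStrongGrading A) (h : IsDualBasis_s1 A c s t)
    (hf : IsBimodMap A a b f) {y : Λ} (hy : y ∈ A (c⁻¹ * a * c)) :
    conjMap s t f y ∈ A (c⁻¹ * b * c) :=
  AddSubgroup.sum_mem _ fun i _ => AddSubgroup.sum_mem _ fun j _ =>
    hA.mul_mul_mem_of_eq rfl (h.left_mem i)
      (hf.mapsTo _ (h.mul_mul_mem hA (by group) hy i j)) (h.right_mem j)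

theorem conjMap_mul_left (hA : IsStrongGrading A) (h : IsDualBasis_s1 A c s t)
    (hf : IsBimodMap A a b f) {d y : Λ} (hd : d ∈ A 1) (hy : y ∈ A (c⁻¹ * a * c)) :
    conjMap s t f (d * y) = d * conjMap s t f y := by
  have expand : ∀ i j, f (t i * (d * y) * s j) = ∑ m, t i * d * s m * f (t m * y * s j) := by
    intro i j
    have : t i * (d * y) * s j = ∑ m, t i * d * s m * (t m * y * s j) := by
      conv_lhs => rw [← h.sum_mul_mul y]
      simp only [Finset.mul_sum, Finset.sum_mul, mul_assoc]
    rw [this, map_sum]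
    exact Finset.sum_congr rfl fun m _ => hf.map_mul_left _ (h.mul_mul_mem hA (by group) hd i m)
      _ (h.mul_mul_mem hA (by group) hy m j)
  simp only [conjMap_apply, expand]
  simp only [Finset.mul_sum, Finset.sum_mul, mul_assoc]
  rw [Finset.sum_comm]
  conv_lhs => enter [2, j]; rw [Finset.sum_comm]
  simp only [h.sum_mul_mul]
  exact Finset.sum_comm

theorem conjMap_mul_right (hA : IsStrongGrading A) (h : IsDualBasis_s1 A c s t)
    (hf : IsBimodMap A a b f) {d y : Λ} (hd : d ∈ A 1) (hy : y ∈ A (c⁻¹ * a * c)) :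
    conjMap s t f (y * d) = conjMap s t f y * d := by
  have expand : ∀ i j, f (t i * (y * d) * s j) = ∑ m, f (t i * y * s m) * (t m * d * s j) := by
    intro i j
    have : t i * (y * d) * s j = ∑ m, t i * y * s m * (t m * d * s j) := by
      conv_lhs => rw [← h.sum_mul_mul d]
      simp only [Finset.mul_sum, Finset.sum_mul, mul_assoc]
    rw [this, map_sum]
    exact Finset.sum_congr rfl fun m _ => hf.map_mul_right _ (h.mul_mul_mem hA (by group) hd m j)
      _ (h.mul_mul_mem hA (by group) hy i m)
  simp only [conjMap_apply, expand]
  simp only [Finset.mul_sum, Finset.sum_mul, mul_assoc]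
  conv_lhs => enter [2, i]; rw [Finset.sum_comm]
  simp only [← Finset.mul_sum, h.sum_mul_eq_one, mul_one]

theorem isBimodMap_conjMap (hA : IsStrongGrading A) (h : IsDualBasis_s1 A c s t)
    (hf : IsBimodMap A a b f) : IsBimodMap A (c⁻¹ * a * c) (c⁻¹ * b * c) (conjMap s t f) :=
  ⟨fun _ hy => h.conjMap_mem hA hf hy, fun _ hd _ hy => h.conjMap_mul_left hA hf hd hy,
    fun _ hd _ hy => h.conjMap_mul_right hA hf hd hy⟩

theorem conjMap_conjMap (hA : IsStrongGrading A) (h : IsDualBasis_s1 A c s t)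
    {g : Λ →+ Λ} {e : G} (hf : IsBimodMap A a b f) (hg : IsBimodMap A b e g) :
    ∀ y ∈ A (c⁻¹ * a * c), conjMap s t g (conjMap s t f y) = conjMap s t (g.comp f) y := by
  intro y hy
  have hts : ∀ i m, t i * s m ∈ A 1 := fun i m =>
    hA.mul_mem_of_eq (mul_inv_cancel c) (h.right_mem i) (h.left_mem m)
  have hF : ∀ m n, f (t m * y * s n) ∈ A b := fun m n =>
    hf.mapsTo _ (h.mul_mul_mem hA (by group) hy m n)
  have key : ∀ i j, g (t i * conjMap s t f y * s j) = t i * conjMap s t (g.comp f) y * s j := by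
    intro i j
    have expand : t i * conjMap s t f y * s j
        = ∑ m, ∑ n, t i * s m * f (t m * y * s n) * (t n * s j) := by
      simp only [conjMap_apply, Finset.mul_sum, Finset.sum_mul, mul_assoc]
    rw [expand, conjMap_apply]
    simp only [map_sum, Finset.mul_sum, Finset.sum_mul]
    refine Finset.sum_congr rfl fun m _ => Finset.sum_congr rfl fun n _ => ?_
    rw [hg.map_mul_right _ (hts n j) _ (hA.mul_mem_of_eq (one_mul b) (hts i m) (hF m n)),
      hg.map_mul_left _ (hts i m) _ (hF m n)]
    simp only [AddMonoidHom.coe_comp, Function.comp_apply, mul_assoc]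
  rw [conjMap_apply]
  simp only [key, h.sum_sum_mul_mul]

end IsDualBasis_s1

end conjMap

theorem ComponentBimodIso.conj [DecidableEq G] (hA : IsStrongGrading A) {a b : G}
    (h : ComponentBimodIso A a b) (c : G) : ComponentBimodIso A (c⁻¹ * a * c) (c⁻¹ * b * c) := by
  obtain ⟨f, f', hf, hf'_mem, hff', hf'f⟩ := (componentBimodIso_iff hA).1 h
  have hf' := hf.symm hA hf'_mem hff' hf'f
  obtain ⟨n, s, t, hst⟩ := hA.exists_isDualBasis c
  refine (componentBimodIso_iff hA).2 ⟨conjMap s t f, conjMap s t f',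
    hst.isBimodMap_conjMap hA hf, (hst.isBimodMap_conjMap hA hf').mapsTo,
    fun y hy => ?_, fun y hy => ?_⟩
  · rw [hst.conjMap_conjMap hA hf hf' y hy, hst.conjMap_eq_self hA hff' y hy]
  · rw [hst.conjMap_conjMap hA hf' hf y hy, hst.conjMap_eq_self hA hf'f y hy]

theorem componentBimodIso_conj_one_iff [DecidableEq G] (hA : IsStrongGrading A) {c k : G} :
    ComponentBimodIso A (c⁻¹ * k * c) 1 ↔ ComponentBimodIso A k 1 := by
  refine ⟨fun h => ?_, fun h => by simpa using h.conj hA c⟩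
  simpa [mul_assoc] using h.conj hA c⁻¹

end

/-- For a strongly `G`-graded ring with identity component `Δ`,
`Inn_Δ(g⁻¹Hg) = g⁻¹ Inn_Δ(H) g`, where `Inn_Δ(H) = {h ∈ H : Λ_h ≅ Δ as Δ-bimodules}`. -/
theorem inn_conj {G Λ : Type*} [Group G] [Ring Λ] [DecidableEq G]
    (A : G → AddSubgroup Λ) (hA : IsStrongGrading A) (g : G) (H : Subgroup G) :
    {x : G | x ∈ (fun y => g⁻¹ * y * g) '' (H : Set G) ∧ ComponentBimodIso A x 1}
      = (fun y => g⁻¹ * y * g) '' {x : G | x ∈ H ∧ ComponentBimodIso A x 1} := by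
  ext x
  constructor
  · rintro ⟨⟨k, hk, rfl⟩, hiso⟩
    exact ⟨k, ⟨hk, (componentBimodIso_conj_one_iff hA).1 hiso⟩, rfl⟩
  · rintro ⟨k, ⟨hk, hiso⟩, rfl⟩
    exact ⟨⟨k, hk, rfl⟩, (componentBimodIso_conj_one_iff hA).2 hiso⟩
end

section
/- Let Λ = ⊕_{g∈G} Λ_g be a strongly G-graded ring with identity component Δ. Then for every g ∈ G, the subset {h ∈ G : Λ_h ≅ Δ as Δ-bimodules} is a subgroup of G. -/
open Pointwise
/-!
`Λ_h ≅ Δ` as `Δ`-bimodules exactly when `Λ_h` contains a unit `u` centralising `Δ` with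
`u⁻¹ ∈ Λ_{h⁻¹}`: given such a `u`, right multiplication by `u⁻¹` is the isomorphism; conversely
for `u := f⁻¹(1)` every `a ∈ Λ_h` equals `f(a) u = u f(a)`, and strongness gives
`1 ∈ Λ_{h⁻¹} Λ_h ⊆ Λ_{h⁻¹} u` (and symmetrically), so `u` is invertible. Degrees of such units
form a subgroup since such units are closed under products and inverses.
-/

namespace IsStrongGrading

variable {G Λ : Type*} [Group G] [Ring Λ] [DecidableEq G] {A : G → AddSubgroup Λ}

lemma mul_mem_of_mul_eq (hA : IsStrongGrading A) {g h k : G} (hk : g * h = k) {a b : Λ}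
    (ha : a ∈ A g) (hb : b ∈ A h) : a * b ∈ A k :=
  hk ▸ hA.mul_mem g h a ha b hb

lemma exists_mul_eq_one_of_forall_eq_mul_right (hA : IsStrongGrading A) {h : G} {u : Λ}
    (hu : ∀ a ∈ A h, ∃ d ∈ A 1, a = d * u) : ∃ w ∈ A h⁻¹, w * u = 1 := by
  have hsub : (A h⁻¹ : Set Λ) * A h ⊆ (A h⁻¹).map (AddMonoidHom.mulRight u) := by
    rintro _ ⟨b, hb, a, ha, rfl⟩
    obtain ⟨d, hd, rfl⟩ := hu a ha
    exact ⟨b * d, hA.mul_mem_of_mul_eq (mul_one _) hb hd, mul_assoc b d u⟩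
  have hone : (1 : Λ) ∈ A (h⁻¹ * h) := by simpa using hA.one_mem
  exact (AddSubgroup.closure_le _).mpr hsub (hA.strong h⁻¹ h hone)

lemma exists_mul_eq_one_of_forall_eq_mul_left (hA : IsStrongGrading A) {h : G} {u : Λ}
    (hu : ∀ a ∈ A h, ∃ d ∈ A 1, a = u * d) : ∃ w ∈ A h⁻¹, u * w = 1 := by
  have hsub : (A h : Set Λ) * A h⁻¹ ⊆ (A h⁻¹).map (AddMonoidHom.mulLeft u) := by
    rintro _ ⟨a, ha, b, hb, rfl⟩
    obtain ⟨d, hd, rfl⟩ := hu a ha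
    exact ⟨d * b, hA.mul_mem_of_mul_eq (one_mul _) hd hb, (mul_assoc u d b).symm⟩
  have hone : (1 : Λ) ∈ A (h * h⁻¹) := by simpa using hA.one_mem
  exact (AddSubgroup.closure_le _).mpr hsub (hA.strong h h⁻¹ hone)

def centralUnitDegrees (hA : IsStrongGrading A) : Subgroup G where
  carrier := {h | ∃ u : Λˣ, (u : Λ) ∈ A h ∧ ((u⁻¹ : Λˣ) : Λ) ∈ A h⁻¹ ∧ ∀ d ∈ A 1, Commute (u : Λ) d}
  one_mem' := ⟨1, hA.one_mem, by simpa using hA.one_mem, fun d _ => Commute.one_left d⟩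
  mul_mem' := by
    rintro g k ⟨u, hu, hu', hcu⟩ ⟨v, hv, hv', hcv⟩
    refine ⟨u * v, hA.mul_mem g k _ hu _ hv, ?_, fun d hd => (hcu d hd).mul_left (hcv d hd)⟩
    simp only [mul_inv_rev, Units.val_mul]
    exact hA.mul_mem _ _ _ hv' _ hu'
  inv_mem' := by
    rintro h ⟨u, hu, hu', hcu⟩
    exact ⟨u⁻¹, hu', by simpa using hu, fun d hd => (hcu d hd).units_inv_left⟩

lemma componentBimodIso_of_mem_centralUnitDegrees (hA : IsStrongGrading A) {h : G}
    (hh : h ∈ hA.centralUnitDegrees) : ComponentBimodIso A h 1 := by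
  obtain ⟨u, hu, hu', hcu⟩ := hh
  have toOne (x : A h) : (x : Λ) * ↑u⁻¹ ∈ A 1 := hA.mul_mem_of_mul_eq (mul_inv_cancel h) x.2 hu'
  have ofOne (y : A 1) : (y : Λ) * u ∈ A h := hA.mul_mem_of_mul_eq (one_mul h) y.2 hu
  refine ⟨{ toFun x := ⟨x * ↑u⁻¹, toOne x⟩
            invFun y := ⟨y * u, ofOne y⟩
            left_inv x := by ext; simp [mul_assoc]
            right_inv y := by ext; simp [mul_assoc]
            map_add' x y := by ext; simp [add_mul] }, ?_, ?_⟩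
  · intro d _ x y hxy
    simp only [AddEquiv.coe_mk, Equiv.coe_fn_mk]
    rw [hxy, mul_assoc]
  · intro d hd x y hxy
    simp only [AddEquiv.coe_mk, Equiv.coe_fn_mk]
    rw [hxy, mul_assoc, ← (hcu d hd).units_inv_left.eq, mul_assoc]

lemma mem_centralUnitDegrees_of_componentBimodIso (hA : IsStrongGrading A) {h : G}
    (hiso : ComponentBimodIso A h 1) : h ∈ hA.centralUnitDegrees := by
  obtain ⟨f, hl, hr⟩ := hiso
  set u : A h := f.symm ⟨1, hA.one_mem⟩
  have hfu : (f u : Λ) = 1 := by simp [u]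
  have hleft (d : A 1) : f ⟨d * u, hA.mul_mem_of_mul_eq (one_mul h) d.2 u.2⟩ = d := by
    ext; rw [hl d d.2 u _ rfl, hfu, mul_one]
  have hright (d : A 1) : f ⟨u * d, hA.mul_mem_of_mul_eq (mul_one h) u.2 d.2⟩ = d := by
    ext; rw [hr d d.2 u _ rfl, hfu, one_mul]
  have hcomm (d : Λ) (hd : d ∈ A 1) : Commute (u : Λ) d :=
    (congrArg Subtype.val (f.injective ((hright ⟨d, hd⟩).trans (hleft ⟨d, hd⟩).symm)) :)
  have eq_mul (a : Λ) (ha : a ∈ A h) : a = (f ⟨a, ha⟩ : Λ) * u :=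
    congrArg Subtype.val (f.injective (hleft (f ⟨a, ha⟩)).symm :)
  obtain ⟨w, hw, hwu⟩ := hA.exists_mul_eq_one_of_forall_eq_mul_right
    fun a ha => ⟨f ⟨a, ha⟩, (f _).2, eq_mul a ha⟩
  obtain ⟨w', -, huw'⟩ := hA.exists_mul_eq_one_of_forall_eq_mul_left
    fun a ha => ⟨f ⟨a, ha⟩, (f _).2, (eq_mul a ha).trans (hcomm _ (f _).2).symm.eq⟩
  obtain rfl : w = w' := left_inv_eq_right_inv hwu huw'
  exact ⟨⟨u, w, huw', hwu⟩, u.2, hw, hcomm⟩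

end IsStrongGrading

/-- For a strongly `G`-graded ring, the set of `h ∈ G` with
`Λ_h ≅ Δ` as `Δ`-bimodules is a subgroup of `G`. -/
theorem inn_isSubgroup {G Λ : Type*} [Group G] [Ring Λ] [DecidableEq G]
    (A : G → AddSubgroup Λ) (hA : IsStrongGrading A) :
    ∃ S : Subgroup G, (S : Set G) = {h : G | ComponentBimodIso A h 1} :=
  ⟨hA.centralUnitDegrees, Set.ext fun _ =>
    ⟨hA.componentBimodIso_of_mem_centralUnitDegrees,
      hA.mem_centralUnitDegrees_of_componentBimodIso⟩⟩
end

section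
/- Let Λ = ⊕_{g∈G} Λ_g be a strongly G-graded ring with identity component Δ, and let e ∈ Δ be an idempotent such that ΔeΔ = Δ (e is a full idempotent). Then eΛe is strongly G-graded with homogeneous components (eΛe)_g = eΛ_g e; that is, (eΛ_g e)(eΛ_h e) = eΛ_{gh}e for all g, h ∈ G. -/
open Pointwise
/-- The additive endomorphism `x ↦ e * x * e` of a ring. -/
def cornerHom {Λ : Type*} [Ring Λ] (e : Λ) : Λ →+ Λ :=
  (AddMonoidHom.mulLeft e).comp (AddMonoidHom.mulRight e)

lemma corner_mul {Λ : Type*} [Ring Λ] (e : Λ) (hid : e * e = e) (x y : Λ) :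
    cornerHom e x * cornerHom e y = cornerHom e (x * e * y) := by
  show (e * (x * e)) * (e * (y * e)) = e * ((x * e * y) * e)
  calc (e * (x * e)) * (e * (y * e)) = e * (x * (e * e) * y * e) := by noncomm_ring
    _ = e * ((x * e * y) * e) := by rw [hid]

/-- If `e` is a full idempotent of the identity component `Δ` of a
strongly `G`-graded ring `Λ`, then `eΛe` is strongly `G`-graded with components
`eΛ_ge`: one has `(eΛ_ge)(eΛ_he) = eΛ_{gh}e` for all `g, h ∈ G`. -/
theorem corner_stronglyGraded {G Λ : Type*} [Group G] [Ring Λ] [DecidableEq G]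
    (A : G → AddSubgroup Λ) (hA : IsStrongGrading A) (e : Λ)
    (he : e ∈ A (1 : G)) (hid : e * e = e)
    (hfull : AddSubgroup.closure
        {x : Λ | ∃ a ∈ A (1 : G), ∃ b ∈ A (1 : G), x = a * e * b} = A (1 : G)) :
    ∀ g h : G,
      AddSubgroup.closure
          (((A g).map (cornerHom e) : Set Λ) * ((A h).map (cornerHom e) : Set Λ))
        = (A (g * h)).map (cornerHom e) := by
  intro g h
  have hcm := corner_mul e hid
  apply le_antisymm
  · refine (AddSubgroup.closure_le _).2 ?_
    rintro z ⟨p, ⟨a, ha, rfl⟩, q, ⟨b, hb, rfl⟩, rfl⟩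
    refine ⟨a * e * b, ?_, (hcm a b).symm⟩
    have h2 : a * e * b ∈ A (g * 1 * h) :=
      hA.mul_mem _ h _ (hA.mul_mem g 1 a ha e he) b hb
    simpa using h2
  · rintro z ⟨c, hc, rfl⟩
    set K := AddSubgroup.closure
      (((A g).map (cornerHom e) : Set Λ) * ((A h).map (cornerHom e) : Set Λ)) with hK
    have hc' := hA.strong g h hc
    refine AddSubgroup.closure_induction (p := fun c _ => cornerHom e c ∈ K)
      ?_ ?_ ?_ ?_ hc'
    · rintro w ⟨x, hx, y, hy, rfl⟩
      have h1 : (1 : Λ) ∈ AddSubgroup.closure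
          {x : Λ | ∃ a ∈ A (1 : G), ∃ b ∈ A (1 : G), x = a * e * b} := by
        rw [hfull]; exact hA.one_mem
      have key : cornerHom e (x * 1 * y) ∈ K := by
        refine AddSubgroup.closure_induction
          (p := fun d _ => cornerHom e (x * d * y) ∈ K) ?_ ?_ ?_ ?_ h1
        · rintro w ⟨a, ha, b, hb, rfl⟩
          have hxa : x * a ∈ A g := by
            have := hA.mul_mem g 1 x hx a ha; simpa using this
          have hby : b * y ∈ A h := by
            have := hA.mul_mem 1 h b hb y hy; simpa using this
          have heq : cornerHom e (x * (a * e * b) * y)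
              = cornerHom e (x * a) * cornerHom e (b * y) := by
            rw [hcm]; congr 1; noncomm_ring
          rw [heq]
          exact AddSubgroup.subset_closure
            ⟨_, ⟨x * a, hxa, rfl⟩, _, ⟨b * y, hby, rfl⟩, rfl⟩
        · simpa using zero_mem K
        · intro p q _ _ hp hq
          have heq : cornerHom e (x * (p + q) * y)
              = cornerHom e (x * p * y) + cornerHom e (x * q * y) := by
            rw [← map_add]; congr 1; noncomm_ring
          rw [heq]; exact add_mem hp hq
        · intro p _ hp
          have heq : cornerHom e (x * (-p) * y) = -(cornerHom e (x * p * y)) := by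
            rw [← map_neg]; congr 1; noncomm_ring
          rw [heq]; exact neg_mem hp
      simpa using key
    · simp only [map_zero]; exact zero_mem K
    · intro p q _ _ hp hq; rw [map_add]; exact add_mem hp hq
    · intro p _ hp; rw [map_neg]; exact neg_mem hp
end

section
/- Let Λ be a strongly G-graded ring with identity component Δ = Δ_1 ⊕ ⋯ ⊕ Δ_t (sum of rings with central idempotents e_1,…,e_t), and let G act on {e_1,…,e_t} via e_iΛ_g = Λ_g e_{g(i)}. Let ε be one of the e_i and H ≤ G its stabilizer. Then εΛε is strongly H-graded with components (εΛε)_h = εΛ_h ε for h ∈ H, and its identity component is εΔε = εΔ. -/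
open Pointwise
/-- Let `Λ` be strongly `G`-graded with identity component
`Δ = Δ_1 ⊕ ⋯ ⊕ Δ_t` (central idempotents `e i`), let `G` act on the idempotents
via `e i * Λ_g = Λ_g * e (σ g i)`, let `ε = e i₀` and let `H` be its stabilizer.
Then `εΛε` is strongly `H`-graded with components `εΛ_hε` (`h ∈ H`): the
components multiply correctly, the components for `g ∉ H` vanish (so
`εΛε = ⊕_{h ∈ H} εΛ_hε`), and the identity component is `εΔε = εΔ`. -/
theorem stabilizer_corner_stronglyGraded {G Λ : Type*} [Group G] [Ring Λ] [DecidableEq G]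
    (A : G → AddSubgroup Λ) (hA : IsStrongGrading A) (t : ℕ) (e : Fin t → Λ)
    (hmem : ∀ i, e i ∈ A (1 : G))
    (hcentral : ∀ i, ∀ d ∈ A (1 : G), d * e i = e i * d)
    (hidem : ∀ i, e i * e i = e i)
    (horth : ∀ i j, i ≠ j → e i * e j = 0)
    (hsum : ∑ i, e i = 1)
    (σ : G →* Equiv.Perm (Fin t))
    (hσ : ∀ (g : G) (i : Fin t),
      {z : Λ | ∃ x ∈ A g, z = e i * x} = {z : Λ | ∃ x ∈ A g, z = x * e (σ g i)})
    (i₀ : Fin t) (H : Subgroup G) (hH : ∀ g : G, g ∈ H ↔ σ g i₀ = i₀) :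
    (∀ h₁ h₂ : G, h₁ ∈ H → h₂ ∈ H →
      AddSubgroup.closure
          (((A h₁).map (cornerHom (e i₀)) : Set Λ) * ((A h₂).map (cornerHom (e i₀)) : Set Λ))
        = (A (h₁ * h₂)).map (cornerHom (e i₀))) ∧
    (∀ g : G, g ∉ H → (A g).map (cornerHom (e i₀)) = ⊥) ∧
    ((A (1 : G)).map (cornerHom (e i₀)) : Set Λ) = (fun d => e i₀ * d) '' (A (1 : G)) := by

  have hid : e i₀ * e i₀ = e i₀ := hidem i₀
  have hcorner : ∀ x : Λ, cornerHom (e i₀) x = e i₀ * x * e i₀ := by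
    intro x
    simp [cornerHom, mul_assoc]
  have L1 : ∀ g : G, g ∈ H → ∀ x ∈ A g, ∃ x' ∈ A g, e i₀ * x = x' * e i₀ := by
    intro g hg x hx
    have h1 : e i₀ * x ∈ {z : Λ | ∃ y ∈ A g, z = e i₀ * y} := ⟨x, hx, rfl⟩
    rw [hσ g i₀] at h1
    obtain ⟨x', hx', heq⟩ := h1
    rw [(hH g).mp hg] at heq
    exact ⟨x', hx', heq⟩
  have L2 : ∀ g : G, g ∈ H → ∀ x ∈ A g, ∃ x' ∈ A g, x * e i₀ = e i₀ * x' := by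
    intro g hg x hx
    have h1 : x * e i₀ ∈ {z : Λ | ∃ y ∈ A g, z = y * e (σ g i₀)} :=
      ⟨x, hx, by rw [(hH g).mp hg]⟩
    rw [← hσ g i₀] at h1
    obtain ⟨x', hx', heq⟩ := h1
    exact ⟨x', hx', heq⟩
  have C1 : ∀ g : G, g ∈ H → ∀ x ∈ A g, e i₀ * x * e i₀ = e i₀ * x := by
    intro g hg x hx
    obtain ⟨x', hx', heq⟩ := L1 g hg x hx
    rw [heq, mul_assoc, hid]
  have C2 : ∀ g : G, g ∈ H → ∀ x ∈ A g, ∃ x' ∈ A g, x * e i₀ = e i₀ * x' * e i₀ := by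
    intro g hg x hx
    obtain ⟨x', hx', heq⟩ := L2 g hg x hx
    exact ⟨x', hx', by rw [heq, C1 g hg x' hx']⟩
  refine ⟨?_, ?_, ?_⟩
  · intro h₁ h₂ hh₁ hh₂
    apply le_antisymm
    · rw [AddSubgroup.closure_le]
      rintro z hz
      rw [Set.mem_mul] at hz
      obtain ⟨p, hp, q, hq, rfl⟩ := hz
      rw [SetLike.mem_coe, AddSubgroup.mem_map] at hp hq
      obtain ⟨a, ha, rfl⟩ := hp
      obtain ⟨b, hb, rfl⟩ := hq
      rw [SetLike.mem_coe, AddSubgroup.mem_map]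
      refine ⟨a * (e i₀ * b), ?_, ?_⟩
      · have := hA.mul_mem h₁ (1 * h₂) a ha (e i₀ * b)
          (hA.mul_mem 1 h₂ (e i₀) (hmem i₀) b hb)
        simpa using this
      · rw [hcorner, hcorner, hcorner]
        calc e i₀ * (a * (e i₀ * b)) * e i₀
            = e i₀ * a * ((e i₀ * e i₀) * (b * e i₀)) := by
              rw [hid]; simp [mul_assoc]
          _ = e i₀ * a * e i₀ * (e i₀ * b * e i₀) := by simp [mul_assoc]
    · intro z hz
      rw [AddSubgroup.mem_map] at hz
      obtain ⟨c, hc, rfl⟩ := hz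
      have hcc : c ∈ AddSubgroup.closure ((A h₁ : Set Λ) * (A h₂ : Set Λ)) :=
        hA.strong h₁ h₂ hc
      have hmem' : cornerHom (e i₀) c ∈
          (AddSubgroup.closure ((A h₁ : Set Λ) * (A h₂ : Set Λ))).map (cornerHom (e i₀)) :=
        AddSubgroup.mem_map_of_mem _ hcc
      rw [AddMonoidHom.map_closure] at hmem'
      refine (AddSubgroup.closure_le _).mpr ?_ hmem'
      rintro w hw
      obtain ⟨v, hv, rfl⟩ := hw
      rw [Set.mem_mul] at hv
      obtain ⟨a, ha, b, hb, rfl⟩ := hv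
      apply AddSubgroup.subset_closure
      obtain ⟨b', hb', hbe⟩ := C2 h₂ hh₂ b hb
      rw [Set.mem_mul]
      refine ⟨cornerHom (e i₀) a, ?_, cornerHom (e i₀) b', ?_, ?_⟩
      · exact AddSubgroup.mem_map_of_mem _ ha
      · exact AddSubgroup.mem_map_of_mem _ hb'
      · rw [hcorner, hcorner, hcorner, C1 h₁ hh₁ a ha]
        calc e i₀ * a * (e i₀ * b' * e i₀) = e i₀ * a * (b * e i₀) := by rw [← hbe]
          _ = e i₀ * (a * b) * e i₀ := by simp [mul_assoc]
  · intro g hg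
    rw [AddSubgroup.eq_bot_iff_forall]
    intro z hz
    rw [AddSubgroup.mem_map] at hz
    obtain ⟨x, hx, rfl⟩ := hz
    have h1 : e i₀ * x ∈ {z : Λ | ∃ y ∈ A g, z = e i₀ * y} := ⟨x, hx, rfl⟩
    rw [hσ g i₀] at h1
    obtain ⟨x', hx', heq⟩ := h1
    have hne : σ g i₀ ≠ i₀ := fun h => hg ((hH g).mpr h)
    rw [hcorner, heq, mul_assoc, horth _ _ hne, mul_zero]
  · ext z
    simp only [SetLike.mem_coe, AddSubgroup.mem_map, Set.mem_image]
    have key : ∀ d ∈ A (1 : G), cornerHom (e i₀) d = e i₀ * d := by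
      intro d hd
      rw [hcorner, mul_assoc, hcentral i₀ d hd, ← mul_assoc, hid]
    constructor
    · rintro ⟨d, hd, rfl⟩
      exact ⟨d, hd, (key d hd).symm⟩
    · rintro ⟨d, hd, rfl⟩
      exact ⟨d, hd, key d hd⟩
end

section
/- Let Λ = ⊕_{g∈G} Λ_g be a strongly G-graded ring with identity component Δ, let e ∈ Δ be a full idempotent, and let g ∈ G. Then Λ_g ≅ Δ as Δ-bimodules if and only if eΛ_g e ≅ eΔe as eΔe-bimodules. -/
/-!
Since `1 = ∑ i, a i * e * b i` with `a i, b i ∈ Δ`, every `x` is recovered from its corners: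
`x = ∑ i j, a i * (e * (b i * x * a j) * e) * b j`. A `Δ`-bimodule isomorphism commutes with
`x ↦ e * x * e`, so it restricts to the corners. Conversely an `eΔe`-bimodule isomorphism `φ`
of corners lifts to `F x = ∑ i j, a i * φ (e * (b i * x * a j) * e) * b j`, which is
characterised by `e * (u * F x * v) * e = φ (e * (u * x * v) * e)` for `u, v ∈ Δ`; since
elements are determined by their corners, this characterisation makes `F` a `Δ`-bimodule map
and makes the lifts of `φ` and `φ⁻¹` mutually inverse.
-/

open Pointwise
section Corner

variable {Λ : Type*} [Ring Λ]

structure IsBimodule (D M : AddSubgroup Λ) : Prop where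
  mul_mem_left : ∀ d ∈ D, ∀ x ∈ M, d * x ∈ M
  mul_mem_right : ∀ d ∈ D, ∀ x ∈ M, x * d ∈ M

def IsBimoduleMap (D : AddSubgroup Λ) {M N : AddSubgroup Λ} (f : M → N) : Prop :=
  (∀ d ∈ D, ∀ x y : M, (y : Λ) = d * x → (f y : Λ) = d * f x) ∧
    (∀ d ∈ D, ∀ x y : M, (y : Λ) = x * d → (f y : Λ) = f x * d)

/-- `1 ∈ D * e * D`, with the witnessing finite sum. -/
def IsFull (D : AddSubgroup Λ) (e : Λ) : Prop :=
  ∃ (ι : Type) (_ : Fintype ι) (a b : ι → Λ),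
    (∀ i, a i ∈ D) ∧ (∀ i, b i ∈ D) ∧ ∑ i, a i * e * b i = 1

def IsCornerLift (D : AddSubgroup Λ) (e : Λ) {M N : AddSubgroup Λ} (F : M → N)
    (φ : M.map (cornerHom e) → N.map (cornerHom e)) : Prop :=
  ∀ x : M, ∀ u ∈ D, ∀ v ∈ D, ∀ z : M.map (cornerHom e),
    (z : Λ) = e * (u * x * v) * e → e * (u * F x * v) * e = φ z

variable {D M N : AddSubgroup Λ} {e : Λ}

theorem cornerHom_apply (x : Λ) : cornerHom e x = e * x * e :=
  (mul_assoc _ _ _).symm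

theorem mul_mul_mem_map_cornerHom {x : Λ} (hx : x ∈ M) : e * x * e ∈ M.map (cornerHom e) :=
  ⟨x, hx, cornerHom_apply x⟩

namespace IsIdempotentElem

theorem mul_left_of_mem_map_cornerHom (hid : IsIdempotentElem e) {z : Λ}
    (hz : z ∈ M.map (cornerHom e)) : e * z = z := by
  obtain ⟨x, -, rfl⟩ := hz
  rw [cornerHom_apply, ← mul_assoc, ← mul_assoc, hid.eq]

theorem mul_right_of_mem_map_cornerHom (hid : IsIdempotentElem e) {z : Λ}
    (hz : z ∈ M.map (cornerHom e)) : z * e = z := by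
  obtain ⟨x, -, rfl⟩ := hz
  rw [cornerHom_apply, mul_assoc, hid.eq]

end IsIdempotentElem

namespace IsBimodule

theorem mul_mul_mem (hM : IsBimodule D M) {u v x : Λ} (hu : u ∈ D) (hv : v ∈ D)
    (hx : x ∈ M) : u * x * v ∈ M :=
  hM.mul_mem_right v hv _ (hM.mul_mem_left u hu x hx)

theorem map_cornerHom_le (hM : IsBimodule D M) (he : e ∈ D) : M.map (cornerHom e) ≤ M := by
  rintro _ ⟨x, hx, rfl⟩
  rw [cornerHom_apply]
  exact hM.mul_mul_mem he he hx

theorem map_cornerHom (hM : IsBimodule D M) (he : e ∈ D) (hid : IsIdempotentElem e) :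
    IsBimodule (D.map (cornerHom e)) (M.map (cornerHom e)) where
  mul_mem_left := by
    rintro _ ⟨d, hd, rfl⟩ z hz
    refine ⟨d * z, hM.mul_mem_left d hd z (hM.map_cornerHom_le he hz), ?_⟩
    simp only [cornerHom_apply, mul_assoc, hid.mul_left_of_mem_map_cornerHom hz,
      hid.mul_right_of_mem_map_cornerHom hz]
  mul_mem_right := by
    rintro _ ⟨d, hd, rfl⟩ z hz
    refine ⟨z * d, hM.mul_mem_right d hd z (hM.map_cornerHom_le he hz), ?_⟩
    simp only [cornerHom_apply, ← mul_assoc, hid.mul_left_of_mem_map_cornerHom hz,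
      hid.mul_right_of_mem_map_cornerHom hz]

end IsBimodule

namespace IsBimoduleMap

theorem symm {f : M ≃+ N} (hf : IsBimoduleMap D f) (hM : IsBimodule D M) :
    IsBimoduleMap D f.symm := by
  constructor
  · intro d hd x y hxy
    let w : M := ⟨d * f.symm x, hM.mul_mem_left d hd _ (f.symm x).2⟩
    have hw : f w = y := Subtype.ext (by rw [hf.1 d hd _ w rfl, f.apply_symm_apply, hxy])
    rw [← hw, f.symm_apply_apply]
  · intro d hd x y hxy
    let w : M := ⟨f.symm x * d, hM.mul_mem_right d hd _ (f.symm x).2⟩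
    have hw : f w = y := Subtype.ext (by rw [hf.2 d hd _ w rfl, f.apply_symm_apply, hxy])
    rw [← hw, f.symm_apply_apply]

theorem map_mul_mul {f : M → N} (hf : IsBimoduleMap D f) (hM : IsBimodule D M) {s t : Λ}
    (hs : s ∈ D) (ht : t ∈ D) (x w : M) (hw : (w : Λ) = s * x * t) :
    (f w : Λ) = s * f x * t := by
  let y : M := ⟨s * x, hM.mul_mem_left s hs x x.2⟩
  rw [hf.2 t ht y w hw, hf.1 s hs x y rfl]

theorem coe_mem_map_cornerHom {f : M → N} (hf : IsBimoduleMap D f) (he : e ∈ D)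
    (hid : IsIdempotentElem e) {x : M} (hx : (x : Λ) ∈ M.map (cornerHom e)) :
    (f x : Λ) ∈ N.map (cornerHom e) := by
  have hl := hf.1 e he x x (hid.mul_left_of_mem_map_cornerHom hx).symm
  have hr := hf.2 e he x x (hid.mul_right_of_mem_map_cornerHom hx).symm
  exact ⟨f x, (f x).2, by rw [cornerHom_apply, ← hl, ← hr]⟩

theorem exists_corner {f : M ≃+ N} (hf : IsBimoduleMap D f) (hD : IsBimodule D D)
    (hM : IsBimodule D M) (hN : IsBimodule D N) (he : e ∈ D) (hid : IsIdempotentElem e) :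
    ∃ f' : M.map (cornerHom e) ≃+ N.map (cornerHom e),
      IsBimoduleMap (D.map (cornerHom e)) f' := by
  have hf' := hf.symm hM
  let iM := AddSubgroup.inclusion (hM.map_cornerHom_le he)
  let iN := AddSubgroup.inclusion (hN.map_cornerHom_le he)
  let f' : M.map (cornerHom e) ≃+ N.map (cornerHom e) :=
    { toFun x := ⟨f (iM x), hf.coe_mem_map_cornerHom he hid x.2⟩
      invFun y := ⟨f.symm (iN y), hf'.coe_mem_map_cornerHom he hid y.2⟩
      left_inv x := Subtype.ext (congrArg Subtype.val (f.symm_apply_apply (iM x)) :)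
      right_inv y := Subtype.ext (congrArg Subtype.val (f.apply_symm_apply (iN y)) :)
      map_add' x y := by ext; simp }
  have hle := hD.map_cornerHom_le he
  exact ⟨f', fun d hd x y => hf.1 d (hle hd) (iM x) (iM y),
    fun d hd x y => hf.2 d (hle hd) (iM x) (iM y)⟩

end IsBimoduleMap

theorem exists_sum_eq_of_mem_closure {x : Λ}
    (hx : x ∈ AddSubgroup.closure {y | ∃ a ∈ D, ∃ b ∈ D, y = a * e * b}) :
    ∃ (ι : Type) (_ : Fintype ι) (a b : ι → Λ),
      (∀ i, a i ∈ D) ∧ (∀ i, b i ∈ D) ∧ ∑ i, a i * e * b i = x := by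
  induction hx using AddSubgroup.closure_induction with
  | mem x hx =>
    obtain ⟨p, hp, q, hq, rfl⟩ := hx
    exact ⟨Unit, inferInstance, fun _ => p, fun _ => q, fun _ => hp, fun _ => hq, by simp⟩
  | zero => exact ⟨Empty, inferInstance, Empty.elim, Empty.elim, nofun, nofun, by simp⟩
  | add x y _ _ hx hy =>
    obtain ⟨ι, _, a, b, ha, hb, rfl⟩ := hx
    obtain ⟨κ, _, a', b', ha', hb', rfl⟩ := hy
    exact ⟨ι ⊕ κ, inferInstance, Sum.elim a a', Sum.elim b b', Sum.forall.2 ⟨ha, ha'⟩,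
      Sum.forall.2 ⟨hb, hb'⟩, by simp [Fintype.sum_sum_type]⟩
  | neg x _ hx =>
    obtain ⟨ι, _, a, b, ha, hb, rfl⟩ := hx
    exact ⟨ι, inferInstance, -a, b, fun i => neg_mem (ha i), hb, by simp⟩

theorem sum_sum_mul_corner_mul {ι : Type*} [Fintype ι] {a b : ι → Λ}
    (hsum : ∑ i, a i * e * b i = 1) (y : Λ) :
    ∑ i, ∑ j, a i * (e * (b i * y * a j) * e) * b j = y :=
  calc ∑ i, ∑ j, a i * (e * (b i * y * a j) * e) * b j
      = (∑ i, a i * e * b i) * y * ∑ j, a j * e * b j := by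
        rw [Finset.sum_mul, Finset.sum_mul_sum]
        simp only [mul_assoc]
    _ = y := by rw [hsum, one_mul, mul_one]

namespace IsFull

theorem eq_of_forall_corner_eq (hfull : IsFull D e) {y y' : Λ}
    (h : ∀ u ∈ D, ∀ v ∈ D, e * (u * y * v) * e = e * (u * y' * v) * e) : y = y' := by
  obtain ⟨ι, _, a, b, ha, hb, hsum⟩ := hfull
  rw [← sum_sum_mul_corner_mul hsum y, ← sum_sum_mul_corner_mul hsum y']
  simp only [h _ (hb _) _ (ha _)]

theorem exists_isCornerLift (hfull : IsFull D e) (hD : IsBimodule D D) (hM : IsBimodule D M)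
    (hN : IsBimodule D N) (he : e ∈ D) (hid : IsIdempotentElem e)
    (φ : M.map (cornerHom e) →+ N.map (cornerHom e))
    (hφ : IsBimoduleMap (D.map (cornerHom e)) φ) :
    ∃ F : M → N, IsCornerLift D e F φ := by
  obtain ⟨ι, _, a, b, ha, hb, hsum⟩ := hfull
  have hMc := hM.map_cornerHom he hid
  have hee (t : Λ) : e * (e * t) = e * t := by rw [← mul_assoc, hid.eq]
  let z (x : M) (i j : ι) : M.map (cornerHom e) :=
    ⟨e * (b i * x * a j) * e, mul_mul_mem_map_cornerHom (hM.mul_mul_mem (hb i) (ha j) x.2)⟩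
  let F (x : M) : Λ := ∑ i, ∑ j, a i * φ (z x i j) * b j
  have hF (x : M) : F x ∈ N := sum_mem fun i _ => sum_mem fun j _ =>
    hN.mul_mul_mem (ha i) (hb j) (hN.map_cornerHom_le he (φ (z x i j)).2)
  refine ⟨fun x => ⟨F x, hF x⟩, fun x u hu v hv w hw => ?_⟩
  have hua (i : ι) : e * (u * a i) * e ∈ D.map (cornerHom e) :=
    mul_mul_mem_map_cornerHom (hD.mul_mem_left u hu _ (ha i))
  have hbv (j : ι) : e * (b j * v) * e ∈ D.map (cornerHom e) :=
    mul_mul_mem_map_cornerHom (hD.mul_mem_right v hv _ (hb j))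
  let w' (i j : ι) : M.map (cornerHom e) :=
    ⟨e * (u * a i) * e * z x i j * (e * (b j * v) * e),
      hMc.mul_mul_mem (hua i) (hbv j) (z x i j).2⟩
  have hterm (i j : ι) : e * (u * (a i * φ (z x i j) * b j) * v) * e = φ (w' i j) := by
    have hp := (φ (z x i j)).2
    rw [hφ.map_mul_mul hMc (hua i) (hbv j) (z x i j) (w' i j) rfl,
      ← hid.mul_left_of_mem_map_cornerHom hp, ← hid.mul_right_of_mem_map_cornerHom hp]
    simp only [mul_assoc, hee]
  have hw' : ∑ i, ∑ j, w' i j = w := Subtype.ext <| by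
    rw [hw, ← sum_sum_mul_corner_mul hsum (x : Λ)]
    simp only [AddSubmonoidClass.coe_finsetSum, w', z, Finset.mul_sum, Finset.sum_mul,
      mul_assoc, hee]
  calc e * (u * F x * v) * e = ∑ i, ∑ j, e * (u * (a i * φ (z x i j) * b j) * v) * e := by
        simp only [F, Finset.mul_sum, Finset.sum_mul]
    _ = φ (∑ i, ∑ j, w' i j) := by simp only [hterm, map_sum, AddSubmonoidClass.coe_finsetSum]
    _ = φ w := by rw [hw']

end IsFull

namespace IsCornerLift

variable {F : M → N} {φ : M.map (cornerHom e) → N.map (cornerHom e)}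

theorem leftInverse (hF : IsCornerLift D e F φ) (hfull : IsFull D e) (hM : IsBimodule D M)
    {G : N → M} {ψ : N.map (cornerHom e) → M.map (cornerHom e)} (hG : IsCornerLift D e G ψ)
    (h : Function.LeftInverse ψ φ) : Function.LeftInverse G F := fun x =>
  Subtype.ext <| hfull.eq_of_forall_corner_eq fun u hu v hv => by
    let z : M.map (cornerHom e) := ⟨_, mul_mul_mem_map_cornerHom (hM.mul_mul_mem hu hv x.2)⟩
    rw [hG (F x) u hu v hv (φ z) (hF x u hu v hv z rfl).symm, h z]

theorem map_add (hF : IsCornerLift D e F φ) (hfull : IsFull D e) (hM : IsBimodule D M)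
    (hφ : ∀ z w, φ (z + w) = φ z + φ w) (x y : M) : F (x + y) = F x + F y :=
  Subtype.ext <| hfull.eq_of_forall_corner_eq fun u hu v hv => by
    let zx : M.map (cornerHom e) := ⟨_, mul_mul_mem_map_cornerHom (hM.mul_mul_mem hu hv x.2)⟩
    let zy : M.map (cornerHom e) := ⟨_, mul_mul_mem_map_cornerHom (hM.mul_mul_mem hu hv y.2)⟩
    have hxy : ((zx + zy : M.map (cornerHom e)) : Λ) = e * (u * (x + y : M) * v) * e := by
      simp only [AddSubgroup.coe_add, zx, zy, mul_add, add_mul]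
    rw [hF (x + y) u hu v hv (zx + zy) hxy, hφ, AddSubgroup.coe_add, AddSubgroup.coe_add,
      ← hF x u hu v hv zx rfl, ← hF y u hu v hv zy rfl]
    simp only [mul_add, add_mul]

theorem isBimoduleMap (hF : IsCornerLift D e F φ) (hfull : IsFull D e) (hD : IsBimodule D D)
    (hM : IsBimodule D M) : IsBimoduleMap D F := by
  refine ⟨fun d hd x y hxy => ?_, fun d hd x y hxy => ?_⟩ <;>
    refine hfull.eq_of_forall_corner_eq fun u hu v hv => ?_ <;>
    let z : M.map (cornerHom e) := ⟨_, mul_mul_mem_map_cornerHom (hM.mul_mul_mem hu hv y.2)⟩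
  · rw [hF y u hu v hv z rfl, ← hF x (u * d) (hD.mul_mem_left u hu d hd) v hv z
      (by simp only [z, hxy, mul_assoc])]
    simp only [mul_assoc]
  · rw [hF y u hu v hv z rfl, ← hF x u hu (d * v) (hD.mul_mem_left d hd v hv) z
      (by simp only [z, hxy, mul_assoc])]
    simp only [mul_assoc]

end IsCornerLift

theorem IsFull.exists_addEquiv_of_corner (hfull : IsFull D e) (hD : IsBimodule D D)
    (hM : IsBimodule D M) (hN : IsBimodule D N) (he : e ∈ D) (hid : IsIdempotentElem e)
    (φ : M.map (cornerHom e) ≃+ N.map (cornerHom e))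
    (hφ : IsBimoduleMap (D.map (cornerHom e)) φ) :
    ∃ F : M ≃+ N, IsBimoduleMap D F := by
  obtain ⟨F, hF⟩ := hfull.exists_isCornerLift hD hM hN he hid φ.toAddMonoidHom hφ
  obtain ⟨G, hG⟩ := hfull.exists_isCornerLift hD hN hM he hid φ.symm.toAddMonoidHom
    (hφ.symm (hM.map_cornerHom he hid))
  exact ⟨
    { toFun := F
      invFun := G
      left_inv := hF.leftInverse hfull hM hG φ.symm_apply_apply
      right_inv := hG.leftInverse hfull hN hF φ.apply_symm_apply
      map_add' := hF.map_add hfull hM (map_add φ) },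
    hF.isBimoduleMap hfull hD hM⟩

theorem isBimoduleMap_map_cornerHom_iff {f : M → N} :
    IsBimoduleMap (D.map (cornerHom e)) f ↔
      (∀ d ∈ D, ∀ x y : M,
          (y : Λ) = e * d * e * x → (f y : Λ) = e * d * e * f x) ∧
        (∀ d ∈ D, ∀ x y : M,
          (y : Λ) = x * (e * d * e) → (f y : Λ) = f x * (e * d * e)) := by
  simp only [IsBimoduleMap, AddSubgroup.mem_map, forall_exists_index, and_imp,
    forall_apply_eq_imp_iff₂, cornerHom_apply]

end Corner

theorem IsStrongGrading.isBimodule {G Λ : Type*} [Group G] [Ring Λ] [DecidableEq G]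
    {A : G → AddSubgroup Λ} (hA : IsStrongGrading A) (g : G) : IsBimodule (A 1) (A g) where
  mul_mem_left d hd x hx := by simpa using hA.mul_mem 1 g d hd x hx
  mul_mem_right d hd x hx := by simpa using hA.mul_mem g 1 x hx d hd

/-- Let `Λ` be strongly `G`-graded with identity component `Δ`,
and let `e ∈ Δ` be a full idempotent. Then `Λ_g ≅ Δ` as `Δ`-bimodules if and
only if `eΛ_ge ≅ eΔe` as `eΔe`-bimodules. -/
theorem bimodIso_iff_corner_bimodIso {G Λ : Type*} [Group G] [Ring Λ] [DecidableEq G]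
    (A : G → AddSubgroup Λ) (hA : IsStrongGrading A) (e : Λ)
    (he : e ∈ A (1 : G)) (hid : e * e = e)
    (hfull : AddSubgroup.closure
        {x : Λ | ∃ a ∈ A (1 : G), ∃ b ∈ A (1 : G), x = a * e * b} = A (1 : G))
    (g : G) :
    ComponentBimodIso A g 1 ↔
      ∃ f : (A g).map (cornerHom e) ≃+ (A (1 : G)).map (cornerHom e),
        (∀ d ∈ A (1 : G), ∀ x y : (A g).map (cornerHom e),
          (y : Λ) = (e * d * e) * (x : Λ) → ((f y : Λ) = (e * d * e) * (f x : Λ))) ∧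
        (∀ d ∈ A (1 : G), ∀ x y : (A g).map (cornerHom e),
          (y : Λ) = (x : Λ) * (e * d * e) → ((f y : Λ) = (f x : Λ) * (e * d * e))) := by
  have hD := hA.isBimodule 1
  have hM := hA.isBimodule g
  have hfull' : IsFull (A 1) e := exists_sum_eq_of_mem_closure (hfull.symm ▸ hA.one_mem)
  simp only [← isBimoduleMap_map_cornerHom_iff]
  exact ⟨fun ⟨f, hf⟩ => IsBimoduleMap.exists_corner (f := f) hf hD hM hD he hid,
    fun ⟨φ, hφ⟩ => hfull'.exists_addEquiv_of_corner hD hM hD he hid φ hφ⟩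
end
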